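/- Let Q be the L²-orthogonal projection from X = span({h_i : 0 ≤ i ≤ 2^{2n}−1}) ⊂ L¹[0,1] onto Y = span(⋃_{k=0}^{n−1} H_{2k}) (the even Haar levels). Then ‖Q‖_{L¹→L¹} ≥ (2n+1)/3. -/

import Mathlib

open Classical in
/-- The Haar system on `(0,1]`: `h₀ = 1_{(0,1]}`, and for `i = 2^m + j` (`0 ≤ j < 2^m`),
`h_i = 1_{(j/2^m,(2j+1)/2^{m+1}]} - 1_{((2j+1)/2^{m+1},(j+1)/2^m]}`. -/
noncomputable def haar (i : ℕ) (t : ℝ) : ℝ :=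
  if i = 0 then (if 0 < t ∧ t ≤ 1 then 1 else 0)
  else
    let m := Nat.log2 i
    let j : ℝ := ((i - 2 ^ m : ℕ) : ℝ)
    if j / 2 ^ m < t ∧ t ≤ (2 * j + 1) / 2 ^ (m + 1) then 1
    else if (2 * j + 1) / 2 ^ (m + 1) < t ∧ t ≤ (j + 1) / 2 ^ m then -1
    else 0

/-- The `k`-th level of the Haar system: `H_k = {h_i : 2^k ≤ i < 2^{k+1}}`. -/
def haarLevel (k : ℕ) : Set (ℝ → ℝ) := haar '' Set.Ico (2 ^ k) (2 ^ (k + 1))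

/-- The `L²[0,1]` inner product. -/
noncomputable def L2inner (f g : ℝ → ℝ) : ℝ := ∫ t in (0:ℝ)..1, f t * g t

/-- The `L¹[0,1]` norm. -/
noncomputable def L1normI (f : ℝ → ℝ) : ℝ := ∫ t in (0:ℝ)..1, |f t|

/-!
The witness is `f = h₀ + ∑_{k<2n} 2ᵏ h_{2ᵏ} = 4ⁿ · 1_{(0, 4⁻ⁿ]}`, of `L¹` norm `1`.
Haar functions of different levels are `L²`-orthogonal, because the coarser one is constant on
the support of the finer one. So `f = g + r` with `g = ∑_{k<n} 4ᵏ h_{2^{2k}} ∈ Y` and `r` in the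
span of `h₀` and the odd levels, orthogonal to `Y`; hence `Q f = g` almost everywhere. Passing
from `g_n` to `g_{n+1}` only changes `g` on `(0, 4⁻ⁿ]`, where `g_n` is constant, and this gives
`‖g_n‖₁ = 2n/3 + 4/9 (1 - 4⁻ⁿ) ≥ (2n+1)/3` for `n ≥ 1`.
-/

open MeasureTheory Set

section L2Geometry

variable {u v w : ℝ → ℝ}

lemma intervalIntegral.integral_congr_Ioc {a b : ℝ} (hab : a ≤ b)
    (h : EqOn u v (Ioc a b)) : ∫ t in a..b, u t = ∫ t in a..b, v t := by
  simp only [intervalIntegral.integral_of_le hab]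
  exact setIntegral_congr_fun measurableSet_Ioc h

lemma intervalIntegral.integral_eq_of_eqOn_Ioc {a b c : ℝ} (hab : a ≤ b)
    (h : ∀ t ∈ Ioc a b, u t = c) : ∫ t in a..b, u t = (b - a) * c := by
  rw [intervalIntegral.integral_congr_Ioc hab h, intervalIntegral.integral_const, smul_eq_mul]

lemma MeasureTheory.MemLp.intervalIntegrable (hu : MemLp u ⊤) (a b : ℝ) :
    IntervalIntegrable u volume a b := by
  have : IsFiniteMeasure (volume.restrict (uIoc a b)) :=
    isFiniteMeasure_restrict.2 measure_Ioc_lt_top.ne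
  exact (intervalIntegrable_iff.2 ((hu.restrict _).integrable le_top))

lemma memLp_top_of_mem_span {S : Set (ℝ → ℝ)} (hS : ∀ s ∈ S, MemLp s ⊤)
    (hu : u ∈ Submodule.span ℝ S) : MemLp u ⊤ := by
  induction hu using Submodule.span_induction with
  | mem s hs => exact hS s hs
  | zero => exact MemLp.zero
  | add u w _ _ hu hw => exact hu.add hw
  | smul c u _ hu => exact hu.const_smul c

lemma L2inner_eq_setIntegral (u v : ℝ → ℝ) : L2inner u v = ∫ t in Ioc 0 1, u t * v t :=
  intervalIntegral.integral_of_le zero_le_one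

lemma L2inner_comm (u v : ℝ → ℝ) : L2inner u v = L2inner v u := by
  simp only [L2inner, mul_comm]

lemma integrableOn_mul_of_memLp_top (hu : MemLp u ⊤) (hv : MemLp v ⊤) :
    IntegrableOn (fun t => u t * v t) (Ioc 0 1) :=
  ((hv.mul hu).restrict _).integrable le_top

lemma L2inner_add_left (hu : MemLp u ⊤) (hw : MemLp w ⊤) (hv : MemLp v ⊤) :
    L2inner (u + w) v = L2inner u v + L2inner w v := by
  simp only [L2inner_eq_setIntegral, Pi.add_apply, add_mul]
  exact integral_add (integrableOn_mul_of_memLp_top hu hv) (integrableOn_mul_of_memLp_top hw hv)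

lemma L2inner_sub_left (hu : MemLp u ⊤) (hw : MemLp w ⊤) (hv : MemLp v ⊤) :
    L2inner (u - w) v = L2inner u v - L2inner w v := by
  simp only [L2inner_eq_setIntegral, Pi.sub_apply, sub_mul]
  exact integral_sub (integrableOn_mul_of_memLp_top hu hv) (integrableOn_mul_of_memLp_top hw hv)

lemma L2inner_smul_left (c : ℝ) (u v : ℝ → ℝ) : L2inner (c • u) v = c * L2inner u v := by
  simp only [L2inner_eq_setIntegral, Pi.smul_apply, smul_eq_mul, mul_assoc, integral_const_mul]

lemma L2inner_eq_zero_of_mem_span_left {S : Set (ℝ → ℝ)} (hS : ∀ s ∈ S, MemLp s ⊤)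
    (hv : MemLp v ⊤) (h : ∀ s ∈ S, L2inner s v = 0) (hu : u ∈ Submodule.span ℝ S) :
    L2inner u v = 0 := by
  induction hu using Submodule.span_induction with
  | mem s hs => exact h s hs
  | zero => simp [L2inner]
  | add u w hu hw hu0 hw0 =>
    rw [L2inner_add_left (memLp_top_of_mem_span hS hu) (memLp_top_of_mem_span hS hw) hv, hu0,
      hw0, add_zero]
  | smul c u _ hu0 => rw [L2inner_smul_left, hu0, mul_zero]

lemma L2inner_eq_zero_of_mem_span {S T : Set (ℝ → ℝ)} (hS : ∀ s ∈ S, MemLp s ⊤)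
    (hT : ∀ s ∈ T, MemLp s ⊤) (h : ∀ s ∈ S, ∀ s' ∈ T, L2inner s s' = 0)
    (hu : u ∈ Submodule.span ℝ S) (hv : v ∈ Submodule.span ℝ T) : L2inner u v = 0 :=
  L2inner_eq_zero_of_mem_span_left hS (memLp_top_of_mem_span hT hv) (fun s hs => by
    rw [L2inner_comm]
    exact L2inner_eq_zero_of_mem_span_left hT (hS s hs)
      (fun s' hs' => by rw [L2inner_comm]; exact h s hs s' hs') hv) hu

lemma ae_eq_of_L2inner_sub_eq_zero {Y : Submodule ℝ (ℝ → ℝ)} (hY : ∀ y ∈ Y, MemLp y ⊤)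
    {a p q : ℝ → ℝ} (ha : MemLp a ⊤) (hp : p ∈ Y) (hq : q ∈ Y)
    (hap : ∀ y ∈ Y, L2inner (a - p) y = 0) (haq : ∀ y ∈ Y, L2inner (a - q) y = 0) :
    p =ᵐ[volume.restrict (Ioc 0 1)] q := by
  have hD : p - q ∈ Y := Y.sub_mem hp hq
  have hpq := hY _ hD
  have hself : L2inner (p - q) (p - q) = 0 :=
    calc L2inner (p - q) (p - q) = L2inner ((a - q) - (a - p)) (p - q) := by congr 1; abel
      _ = L2inner (a - q) (p - q) - L2inner (a - p) (p - q) :=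
        L2inner_sub_left (ha.sub (hY q hq)) (ha.sub (hY p hp)) hpq
      _ = 0 := by rw [haq _ hD, hap _ hD, sub_zero]
  rw [L2inner_eq_setIntegral, integral_eq_zero_iff_of_nonneg (fun t => mul_self_nonneg _)
    (integrableOn_mul_of_memLp_top hpq hpq)] at hself
  filter_upwards [hself] with t ht
  exact sub_eq_zero.1 (mul_self_eq_zero.1 ht)

lemma L1normI_congr_ae (h : u =ᵐ[volume.restrict (Ioc 0 1)] v) : L1normI u = L1normI v := by
  simp only [L1normI, intervalIntegral.integral_of_le zero_le_one]
  exact integral_congr_ae (h.fun_comp abs)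

end L2Geometry

section HaarSystem

lemma haar_two_pow_add_apply {m j : ℕ} (hj : j < 2 ^ m) (t : ℝ) :
    haar (2 ^ m + j) t =
      if j / 2 ^ m < t ∧ t ≤ (2 * j + 1) / 2 ^ (m + 1) then 1
      else if (2 * j + 1) / 2 ^ (m + 1) < t ∧ t ≤ (j + 1) / 2 ^ m then -1 else 0 := by
  have hlog : Nat.log2 (2 ^ m + j) = m := by
    rw [Nat.log2_eq_log_two]
    exact Nat.log_eq_of_pow_le_of_lt_pow (Nat.le_add_right _ _) (by rw [pow_succ]; omega)
  simp only [haar, hlog, Nat.add_sub_cancel_left, (Nat.two_pow_pos m).ne', add_eq_zero,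
    false_and, if_false]

lemma measurable_haar (i : ℕ) : Measurable (haar i) := by
  have step (a b : ℝ) {f g : ℝ → ℝ} (hf : Measurable f) (hg : Measurable g) :
      Measurable fun t => if a < t ∧ t ≤ b then f t else g t :=
    Measurable.ite measurableSet_Ioc hf hg
  unfold haar
  split_ifs
  · exact step _ _ measurable_const measurable_const
  · exact step _ _ measurable_const (step _ _ measurable_const measurable_const)

lemma abs_haar_le_one (i : ℕ) (t : ℝ) : |haar i t| ≤ 1 := by
  unfold haar
  dsimp only
  split_ifs <;> norm_num

lemma memLp_top_haar (i : ℕ) : MemLp (haar i) ⊤ :=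
  memLp_top_of_bound (measurable_haar i).aestronglyMeasurable 1
    (ae_of_all _ (abs_haar_le_one i))

lemma memLp_top_of_mem_range_haar {u : ℝ → ℝ} (hu : u ∈ range haar) : MemLp u ⊤ := by
  obtain ⟨i, rfl⟩ := hu
  exact memLp_top_haar i

lemma haar_zero_apply {t : ℝ} (h0 : 0 < t) (h1 : t ≤ 1) : haar 0 t = 1 := by
  simp [haar, h0, h1]

lemma haar_two_pow_apply (m : ℕ) (t : ℝ) :
    haar (2 ^ m) t =
      if 0 < t ∧ t ≤ (2 ^ (m + 1))⁻¹ then 1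
      else if (2 ^ (m + 1))⁻¹ < t ∧ t ≤ (2 ^ m)⁻¹ then -1 else 0 := by
  simpa using haar_two_pow_add_apply (Nat.two_pow_pos m) t

lemma haar_two_pow_of_le {m : ℕ} {t : ℝ} (h0 : 0 < t) (h1 : t ≤ (2 ^ (m + 1))⁻¹) :
    haar (2 ^ m) t = 1 := by
  rw [haar_two_pow_apply, if_pos ⟨h0, h1⟩]

lemma haar_two_pow_of_mem_Ioc {m : ℕ} {t : ℝ} (h0 : (2 ^ (m + 1))⁻¹ < t) (h1 : t ≤ (2 ^ m)⁻¹) :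
    haar (2 ^ m) t = -1 := by
  rw [haar_two_pow_apply, if_neg (fun h => h.2.not_gt h0), if_pos ⟨h0, h1⟩]

lemma haar_two_pow_of_lt {m : ℕ} {t : ℝ} (h : (2 ^ m)⁻¹ < t) : haar (2 ^ m) t = 0 := by
  have hle : ((2 : ℝ) ^ (m + 1))⁻¹ ≤ (2 ^ m)⁻¹ :=
    inv_anti₀ (by positivity) (pow_le_pow_right₀ one_le_two m.le_succ)
  rw [haar_two_pow_apply, if_neg (fun h' => (h'.2.trans hle).not_gt h),
    if_neg (fun h' => h'.2.not_gt h)]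

end HaarSystem

section Orthogonality

lemma Int.ceil_le_ceil_of_ceil_natCast_mul_le {D : ℕ} (hD : 0 < D) {x y : ℝ}
    (h : ⌈(D : ℝ) * x⌉ ≤ ⌈(D : ℝ) * y⌉) : ⌈x⌉ ≤ ⌈y⌉ := by
  have hD' : (0 : ℝ) < D := Nat.cast_pos.2 hD
  have hDy : ⌈(D : ℝ) * y⌉ ≤ D * ⌈y⌉ := by
    rw [Int.ceil_le]; push_cast; exact mul_le_mul_of_nonneg_left (Int.le_ceil y) hD'.le
  rw [Int.ceil_le, ← mul_le_mul_iff_of_pos_left hD']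
  calc (D : ℝ) * x ≤ ⌈(D : ℝ) * x⌉ := Int.le_ceil _
    _ ≤ ((D * ⌈y⌉ : ℤ) : ℝ) := by exact_mod_cast h.trans hDy
    _ = D * ⌈y⌉ := by push_cast; ring

/-- `⌈2ᵏ t⌉ = j + 1` says that `t` lies in the dyadic interval `(j / 2ᵏ, (j + 1) / 2ᵏ]`, so this
is the nesting of dyadic intervals. -/
lemma ceil_two_pow_mul_eq_of_le {k l : ℕ} (hkl : k ≤ l) {s t : ℝ}
    (h : ⌈(2 : ℝ) ^ l * s⌉ = ⌈(2 : ℝ) ^ l * t⌉) : ⌈(2 : ℝ) ^ k * s⌉ = ⌈(2 : ℝ) ^ k * t⌉ := by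
  have hscale (x : ℝ) : ((2 ^ (l - k) : ℕ) : ℝ) * (2 ^ k * x) = 2 ^ l * x := by
    push_cast; rw [← mul_assoc, ← pow_add, Nat.sub_add_cancel hkl]
  have hD : 0 < 2 ^ (l - k) := Nat.two_pow_pos _
  exact le_antisymm (Int.ceil_le_ceil_of_ceil_natCast_mul_le hD (by rw [hscale, hscale, h]))
    (Int.ceil_le_ceil_of_ceil_natCast_mul_le hD (by rw [hscale, hscale, h]))

lemma ceil_two_pow_mul_eq_of_haar_ne_zero {m j : ℕ} (hj : j < 2 ^ m) {t : ℝ}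
    (ht : haar (2 ^ m + j) t ≠ 0) : ⌈(2 : ℝ) ^ m * t⌉ = j + 1 := by
  have hpos : (0 : ℝ) < 2 ^ m := by positivity
  have hmid : (2 * j + 1 : ℝ) / 2 ^ (m + 1) ≤ (j + 1) / 2 ^ m := by
    rw [pow_succ, div_le_div_iff₀ (by positivity) hpos]; nlinarith
  have hlow : (j : ℝ) / 2 ^ m < (2 * j + 1) / 2 ^ (m + 1) := by
    rw [pow_succ, div_lt_div_iff₀ hpos (by positivity)]; nlinarith
  have hmem : (j : ℝ) / 2 ^ m < t ∧ t ≤ (j + 1) / 2 ^ m := by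
    rw [haar_two_pow_add_apply hj] at ht
    split_ifs at ht with h1 h2
    · exact ⟨h1.1, h1.2.trans hmid⟩
    · exact ⟨hlow.trans h2.1, h2.2⟩
    · exact absurd rfl ht
  rw [Int.ceil_eq_iff]
  rw [div_lt_iff₀ hpos, le_div_iff₀ hpos] at hmem
  push_cast
  constructor <;> linarith

lemma haar_two_pow_add_eq_of_ceil_eq {m j : ℕ} (hj : j < 2 ^ m) {s t : ℝ}
    (h : ⌈(2 : ℝ) ^ (m + 1) * s⌉ = ⌈(2 : ℝ) ^ (m + 1) * t⌉) :
    haar (2 ^ m + j) s = haar (2 ^ m + j) t := by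
  have hP : (0 : ℝ) < 2 ^ m := by positivity
  have hleft (x : ℝ) :
      (j / 2 ^ m < x ∧ x ≤ (2 * j + 1) / 2 ^ (m + 1)) ↔ ⌈(2 : ℝ) ^ (m + 1) * x⌉ = 2 * j + 1 := by
    rw [Int.ceil_eq_iff, div_lt_iff₀ hP, le_div_iff₀ (by positivity), pow_succ]
    push_cast
    constructor <;> rintro ⟨h1, h2⟩ <;> constructor <;> linarith
  have hright (x : ℝ) :
      ((2 * j + 1) / 2 ^ (m + 1) < x ∧ x ≤ (j + 1) / 2 ^ m) ↔
        ⌈(2 : ℝ) ^ (m + 1) * x⌉ = 2 * j + 2 := by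
    rw [Int.ceil_eq_iff, div_lt_iff₀ (by positivity), le_div_iff₀ hP, pow_succ]
    push_cast
    constructor <;> rintro ⟨h1, h2⟩ <;> constructor <;> linarith
  simp only [haar_two_pow_add_apply hj, hleft, hright, h]

lemma haar_eq_of_haar_ne_zero {m j m' j' : ℕ} (hj : j < 2 ^ m) (hj' : j' < 2 ^ m') (hm : m < m')
    {s t : ℝ} (hs : haar (2 ^ m' + j') s ≠ 0) (ht : haar (2 ^ m' + j') t ≠ 0) :
    haar (2 ^ m + j) s = haar (2 ^ m + j) t :=
  haar_two_pow_add_eq_of_ceil_eq hj <| ceil_two_pow_mul_eq_of_le hm <| by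
    rw [ceil_two_pow_mul_eq_of_haar_ne_zero hj' hs, ceil_two_pow_mul_eq_of_haar_ne_zero hj' ht]

lemma haar_zero_eq_one_of_haar_ne_zero {m j : ℕ} (hj : j < 2 ^ m) {t : ℝ}
    (ht : haar (2 ^ m + j) t ≠ 0) : haar 0 t = 1 := by
  have hceil := ceil_two_pow_mul_eq_of_haar_ne_zero hj ht
  rw [Int.ceil_eq_iff] at hceil
  have hj' : (j : ℝ) + 1 ≤ 2 ^ m := by exact_mod_cast hj
  have hP : (0 : ℝ) < 2 ^ m := by positivity
  push_cast at hceil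
  exact haar_zero_apply (pos_of_mul_pos_right (by linarith [j.cast_nonneg (α := ℝ)]) hP.le)
    (le_of_mul_le_mul_left (by linarith) hP)

lemma integral_haar_two_pow_add {m j : ℕ} (hj : j < 2 ^ m) :
    ∫ t in (0 : ℝ)..1, haar (2 ^ m + j) t = 0 := by
  have hP : (0 : ℝ) < 2 ^ m := by positivity
  have hj' : (j : ℝ) + 1 ≤ 2 ^ m := by exact_mod_cast hj
  have hab : (j : ℝ) / 2 ^ m ≤ (2 * j + 1) / 2 ^ (m + 1) := by
    rw [pow_succ, div_le_div_iff₀ hP (by positivity)]; nlinarith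
  have hbc : (2 * j + 1 : ℝ) / 2 ^ (m + 1) ≤ (j + 1) / 2 ^ m := by
    rw [pow_succ, div_le_div_iff₀ (by positivity) hP]; nlinarith
  have hind (t : ℝ) : haar (2 ^ m + j) t =
      (Ioc ((j : ℝ) / 2 ^ m) ((2 * j + 1) / 2 ^ (m + 1))).indicator 1 t -
        (Ioc ((2 * j + 1 : ℝ) / 2 ^ (m + 1)) ((j + 1) / 2 ^ m)).indicator 1 t := by
    rw [haar_two_pow_add_apply hj]
    simp only [indicator, mem_Ioc, Pi.one_apply]
    split_ifs with h1 h2 h3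
    · exact absurd (h1.2.trans_lt h2.1) (lt_irrefl t)
    all_goals norm_num
  have hvol {x y : ℝ} (h0 : 0 ≤ x) (hxy : x ≤ y) (h1 : y ≤ 1) :
      ∫ t in Ioc 0 1, (Ioc x y).indicator 1 t = y - x := by
    rw [integral_indicator_one measurableSet_Ioc, measureReal_restrict_apply measurableSet_Ioc,
      inter_eq_left.2 (Ioc_subset_Ioc h0 h1), Real.volume_real_Ioc_of_le hxy]
  have hint (x y : ℝ) : IntegrableOn ((Ioc x y).indicator (1 : ℝ → ℝ)) (Ioc 0 1) :=
    (integrable_const 1).indicator measurableSet_Ioc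
  have hc1 : (j + 1 : ℝ) / 2 ^ m ≤ 1 := (div_le_one hP).2 hj'
  simp only [hind]
  rw [intervalIntegral.integral_of_le zero_le_one, integral_sub (hint _ _) (hint _ _),
    hvol (by positivity) hab (hbc.trans hc1), hvol ((div_nonneg (by positivity) hP.le).trans hab)
    hbc hc1, pow_succ]
  field_simp
  ring

lemma integral_mul_haar_eq_zero {m j : ℕ} (hj : j < 2 ^ m) {u : ℝ → ℝ}
    (hu : ∀ s t, haar (2 ^ m + j) s ≠ 0 → haar (2 ^ m + j) t ≠ 0 → u s = u t) :
    ∫ t in (0 : ℝ)..1, u t * haar (2 ^ m + j) t = 0 := by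
  by_cases hsupp : ∃ s, haar (2 ^ m + j) s ≠ 0
  · obtain ⟨s, hs⟩ := hsupp
    have hconst (t : ℝ) : u t * haar (2 ^ m + j) t = u s * haar (2 ^ m + j) t := by
      by_cases ht : haar (2 ^ m + j) t = 0
      · rw [ht, mul_zero, mul_zero]
      · rw [hu t s ht hs]
    simp only [hconst, intervalIntegral.integral_const_mul, integral_haar_two_pow_add hj, mul_zero]
  · simp only [not_exists, not_not] at hsupp
    simp [hsupp]

lemma integral_haar_mul_haar_of_lt {m j m' j' : ℕ} (hj : j < 2 ^ m) (hj' : j' < 2 ^ m')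
    (hm : m < m') : ∫ t in (0 : ℝ)..1, haar (2 ^ m + j) t * haar (2 ^ m' + j') t = 0 :=
  integral_mul_haar_eq_zero hj' fun _ _ hs ht => haar_eq_of_haar_ne_zero hj hj' hm hs ht

lemma integral_haar_mul_haar_of_ne {m j m' j' : ℕ} (hj : j < 2 ^ m) (hj' : j' < 2 ^ m')
    (hm : m ≠ m') : ∫ t in (0 : ℝ)..1, haar (2 ^ m + j) t * haar (2 ^ m' + j') t = 0 := by
  rcases hm.lt_or_gt with hm | hm
  · exact integral_haar_mul_haar_of_lt hj hj' hm
  · simpa only [mul_comm] using integral_haar_mul_haar_of_lt hj' hj hm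

lemma integral_haar_zero_mul_haar {m j : ℕ} (hj : j < 2 ^ m) :
    ∫ t in (0 : ℝ)..1, haar 0 t * haar (2 ^ m + j) t = 0 :=
  integral_mul_haar_eq_zero hj fun _ _ hs ht => by
    rw [haar_zero_eq_one_of_haar_ne_zero hj hs, haar_zero_eq_one_of_haar_ne_zero hj ht]

end Orthogonality

section Levels

lemma mem_haarLevel {m : ℕ} {u : ℝ → ℝ} : u ∈ haarLevel m ↔ ∃ j < 2 ^ m, haar (2 ^ m + j) = u := by
  constructor
  · rintro ⟨i, ⟨hi1, hi2⟩, rfl⟩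
    exact ⟨i - 2 ^ m, by rw [pow_succ] at hi2; omega, by rw [Nat.add_sub_cancel' hi1]⟩
  · rintro ⟨j, hj, rfl⟩
    exact ⟨2 ^ m + j, ⟨Nat.le_add_right _ _, by rw [pow_succ]; omega⟩, rfl⟩

lemma haar_two_pow_mem_haarLevel (m : ℕ) : haar (2 ^ m) ∈ haarLevel m :=
  mem_haarLevel.2 ⟨0, Nat.two_pow_pos m, rfl⟩

lemma L2inner_eq_zero_of_mem_haarLevel {m m' : ℕ} (hm : m ≠ m') {u v : ℝ → ℝ}
    (hu : u ∈ haarLevel m) (hv : v ∈ haarLevel m') : L2inner u v = 0 := by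
  obtain ⟨j, hj, rfl⟩ := mem_haarLevel.1 hu
  obtain ⟨j', hj', rfl⟩ := mem_haarLevel.1 hv
  exact integral_haar_mul_haar_of_ne hj hj' hm

lemma L2inner_haar_zero_of_mem_haarLevel {m : ℕ} {v : ℝ → ℝ} (hv : v ∈ haarLevel m) :
    L2inner (haar 0) v = 0 := by
  obtain ⟨j, hj, rfl⟩ := mem_haarLevel.1 hv
  exact integral_haar_zero_mul_haar hj

end Levels

section Witness

noncomputable def spike (N : ℕ) : ℝ → ℝ := haar 0 + ∑ k ∈ Finset.range N, (2 : ℝ) ^ k • haar (2 ^ k)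

noncomputable def evenPart (n : ℕ) : ℝ → ℝ :=
  ∑ k ∈ Finset.range n, (4 : ℝ) ^ k • haar (2 ^ (2 * k))

noncomputable def oddPart (n : ℕ) : ℝ → ℝ :=
  haar 0 + ∑ k ∈ Finset.range n, (2 * 4 ^ k : ℝ) • haar (2 ^ (2 * k + 1))

lemma spike_succ (N : ℕ) : spike (N + 1) = spike N + (2 : ℝ) ^ N • haar (2 ^ N) := by
  rw [spike, spike, Finset.sum_range_succ, add_assoc]

lemma two_pow_two_mul (n : ℕ) : (2 : ℝ) ^ (2 * n) = 4 ^ n := by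
  rw [pow_mul]; norm_num

lemma spike_two_mul (n : ℕ) : spike (2 * n) = evenPart n + oddPart n := by
  induction n with
  | zero => simp [spike, evenPart, oddPart]
  | succ n ih =>
    rw [show 2 * (n + 1) = 2 * n + 1 + 1 by ring, spike_succ, spike_succ, ih]
    simp only [evenPart, oddPart, Finset.sum_range_succ, pow_succ (2 : ℝ) (2 * n), two_pow_two_mul]
    module

lemma spike_mem_span (N : ℕ) : spike N ∈ Submodule.span ℝ (haar '' Iio (2 ^ N)) := by
  refine Submodule.add_mem _ (Submodule.subset_span ⟨0, Nat.two_pow_pos N, rfl⟩)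
    (Submodule.sum_mem _ fun k hk => Submodule.smul_mem _ _ (Submodule.subset_span ⟨2 ^ k, ?_, rfl⟩))
  exact Nat.pow_lt_pow_right one_lt_two (Finset.mem_range.1 hk)

lemma oddPart_mem_span (n : ℕ) :
    oddPart n ∈ Submodule.span ℝ (insert (haar 0) (⋃ k, haarLevel (2 * k + 1))) :=
  Submodule.add_mem _ (Submodule.subset_span (mem_insert _ _)) <|
    Submodule.sum_mem _ fun k _ => Submodule.smul_mem _ _ <| Submodule.subset_span <|
      mem_insert_of_mem _ <| mem_iUnion.2 ⟨k, haar_two_pow_mem_haarLevel _⟩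

lemma L2inner_oddPart_eq_zero (n : ℕ) {y : ℝ → ℝ}
    (hy : y ∈ Submodule.span ℝ (⋃ k, haarLevel (2 * k))) : L2inner (oddPart n) y = 0 := by
  have hodd : insert (haar 0) (⋃ k, haarLevel (2 * k + 1)) ⊆ range haar :=
    insert_subset (mem_range_self 0) (iUnion_subset fun _ => image_subset_range _ _)
  have heven : ⋃ k, haarLevel (2 * k) ⊆ range haar := iUnion_subset fun _ => image_subset_range _ _
  refine L2inner_eq_zero_of_mem_span (fun _ hs => memLp_top_of_mem_range_haar (hodd hs))
    (fun _ hs => memLp_top_of_mem_range_haar (heven hs)) ?_ (oddPart_mem_span n) hy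
  rintro s (rfl | hs) s' hs'
  · obtain ⟨k', hk'⟩ := mem_iUnion.1 hs'
    exact L2inner_haar_zero_of_mem_haarLevel hk'
  · obtain ⟨k, hk⟩ := mem_iUnion.1 hs
    obtain ⟨k', hk'⟩ := mem_iUnion.1 hs'
    exact L2inner_eq_zero_of_mem_haarLevel (by omega) hk hk'

lemma spike_apply (N : ℕ) {t : ℝ} (h0 : 0 < t) (h1 : t ≤ 1) :
    spike N t = if t ≤ (2 ^ N)⁻¹ then 2 ^ N else 0 := by
  induction N with
  | zero => simp [spike, haar_zero_apply h0 h1, h1]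
  | succ N ih =>
    have hle : ((2 : ℝ) ^ (N + 1))⁻¹ ≤ (2 ^ N)⁻¹ :=
      inv_anti₀ (by positivity) (pow_le_pow_right₀ one_le_two N.le_succ)
    rw [spike_succ, Pi.add_apply, ih, Pi.smul_apply, smul_eq_mul]
    by_cases hN1 : t ≤ (2 ^ (N + 1))⁻¹
    · rw [if_pos (hN1.trans hle), if_pos hN1, haar_two_pow_of_le h0 hN1, pow_succ]; ring
    by_cases hN : t ≤ (2 ^ N)⁻¹
    · rw [if_pos hN, if_neg hN1, haar_two_pow_of_mem_Ioc (not_le.1 hN1) hN]; ring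
    · rw [if_neg hN, if_neg hN1, haar_two_pow_of_lt (not_le.1 hN), mul_zero, add_zero]

end Witness

section Norms

lemma memLp_top_spike (N : ℕ) : MemLp (spike N) ⊤ :=
  (memLp_top_haar 0).add (memLp_finsetSum' _ fun _ _ => (memLp_top_haar _).const_smul _)

lemma memLp_top_evenPart (n : ℕ) : MemLp (evenPart n) ⊤ :=
  memLp_finsetSum' _ fun _ _ => (memLp_top_haar _).const_smul _

lemma L1normI_spike (N : ℕ) : L1normI (spike N) = 1 := by
  have hpos : (0 : ℝ) < (2 ^ N)⁻¹ := by positivity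
  have hle : ((2 : ℝ) ^ N)⁻¹ ≤ 1 := inv_le_one_of_one_le₀ (one_le_pow₀ one_le_two)
  have hint := fun a b => ((memLp_top_spike N).intervalIntegrable a b).abs
  rw [L1normI, ← intervalIntegral.integral_add_adjacent_intervals (hint 0 (2 ^ N)⁻¹) (hint _ 1),
    intervalIntegral.integral_eq_of_eqOn_Ioc hpos.le (c := 2 ^ N) fun t ht => by
      rw [spike_apply N ht.1 (ht.2.trans hle), if_pos ht.2, abs_of_pos (by positivity)],
    intervalIntegral.integral_eq_of_eqOn_Ioc hle (c := 0) fun t ht => by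
      rw [spike_apply N (hpos.trans ht.1) ht.2, if_neg (not_le.2 ht.1), abs_zero]]
  field_simp
  ring

lemma haar_two_pow_two_mul_of_lt {n : ℕ} {t : ℝ} (h : (4 ^ n)⁻¹ < t) : haar (2 ^ (2 * n)) t = 0 :=
  haar_two_pow_of_lt (by rwa [two_pow_two_mul])

lemma evenPart_succ_apply (n : ℕ) (t : ℝ) :
    evenPart (n + 1) t = evenPart n t + 4 ^ n * haar (2 ^ (2 * n)) t := by
  simp [evenPart, Finset.sum_range_succ]

lemma evenPart_apply_of_le (n : ℕ) {t : ℝ} (h0 : 0 < t) (h1 : t ≤ (4 ^ n)⁻¹) :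
    evenPart n t = (4 ^ n - 1) / 3 := by
  induction n with
  | zero => simp [evenPart]
  | succ n ih =>
    have h4 : ((4 : ℝ) ^ (n + 1))⁻¹ ≤ (4 ^ n)⁻¹ :=
      inv_anti₀ (by positivity) (pow_le_pow_right₀ (by norm_num) n.le_succ)
    have hhalf : t ≤ (2 ^ (2 * n + 1))⁻¹ := h1.trans <| inv_anti₀ (by positivity) <| by
      rw [pow_succ, two_pow_two_mul, pow_succ]; linarith [pow_pos (by norm_num : (0 : ℝ) < 4) n]
    rw [evenPart_succ_apply, ih (h1.trans h4), haar_two_pow_of_le h0 hhalf, pow_succ]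
    ring

lemma integral_abs_evenPart_succ_initial (n : ℕ) :
    ∫ t in (0 : ℝ)..(4 ^ n)⁻¹, |evenPart (n + 1) t| = 1 := by
  have hx : (0 : ℝ) < 4 ^ n := by positivity
  have hx1 : (1 : ℝ) ≤ 4 ^ n := one_le_pow₀ (by norm_num)
  have hmid : (0 : ℝ) < (2 * 4 ^ n)⁻¹ := by positivity
  have hmid' : ((2 : ℝ) * 4 ^ n)⁻¹ ≤ (4 ^ n)⁻¹ := inv_anti₀ hx (by linarith)
  have hsplit : ((2 : ℝ) ^ (2 * n + 1))⁻¹ = (2 * 4 ^ n)⁻¹ := by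
    rw [pow_succ, two_pow_two_mul, mul_comm]
  have hint := fun a b => ((memLp_top_evenPart (n + 1)).intervalIntegrable a b).abs
  rw [← intervalIntegral.integral_add_adjacent_intervals (hint 0 (2 * 4 ^ n)⁻¹) (hint _ _),
    intervalIntegral.integral_eq_of_eqOn_Ioc hmid.le (c := (4 ^ n - 1) / 3 + 4 ^ n) fun t ht => by
      rw [evenPart_succ_apply, evenPart_apply_of_le n ht.1 (ht.2.trans hmid'),
        haar_two_pow_of_le ht.1 (hsplit ▸ ht.2), abs_of_pos (by linarith), mul_one],
    intervalIntegral.integral_eq_of_eqOn_Ioc hmid' (c := 4 ^ n - (4 ^ n - 1) / 3) fun t ht => by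
      rw [evenPart_succ_apply, evenPart_apply_of_le n (hmid.trans ht.1) ht.2,
        haar_two_pow_of_mem_Ioc (hsplit ▸ ht.1) (two_pow_two_mul n ▸ ht.2), abs_of_neg (by linarith)]
      ring]
  field_simp
  ring

lemma integral_abs_evenPart (n : ℕ) :
    ∫ t in (0 : ℝ)..1, |evenPart n t| = 2 * n / 3 + 4 / 9 * (1 - (4 ^ n)⁻¹) := by
  induction n with
  | zero => simp [evenPart]
  | succ n ih =>
    have ha : (0 : ℝ) < (4 ^ n)⁻¹ := by positivity
    have ha1 : ((4 : ℝ) ^ n)⁻¹ ≤ 1 := inv_le_one_of_one_le₀ (one_le_pow₀ (by norm_num))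
    have hint := fun k a b => ((memLp_top_evenPart k).intervalIntegrable a b).abs
    have htail : ∫ t in (4 ^ n)⁻¹..1, |evenPart (n + 1) t| = ∫ t in (4 ^ n)⁻¹..1, |evenPart n t| :=
      intervalIntegral.integral_congr_Ioc ha1 fun t ht => by
        simp only [evenPart_succ_apply, haar_two_pow_two_mul_of_lt ht.1, mul_zero, add_zero]
    have hhead : ∫ t in (0 : ℝ)..(4 ^ n)⁻¹, |evenPart n t| = (4 ^ n)⁻¹ * ((4 ^ n - 1) / 3) :=
      (intervalIntegral.integral_eq_of_eqOn_Ioc ha.le fun t ht => by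
        rw [evenPart_apply_of_le n ht.1 ht.2, abs_of_nonneg]
        linarith [one_le_pow₀ (M₀ := ℝ) (a := 4) (by norm_num) (n := n)]).trans (by ring)
    rw [← intervalIntegral.integral_add_adjacent_intervals (hint _ 0 (4 ^ n)⁻¹) (hint _ _ 1),
      integral_abs_evenPart_succ_initial, htail]
    rw [← intervalIntegral.integral_add_adjacent_intervals (hint _ 0 (4 ^ n)⁻¹) (hint _ _ 1),
      hhead] at ih
    rw [pow_succ]
    field_simp at ih ⊢
    push_cast
    linarith

end Norms

theorem stmt12_general (n : ℕ) (hn : 1 ≤ n)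
    (X Y : Submodule ℝ (ℝ → ℝ))
    (hX : X = Submodule.span ℝ (haar '' Set.Iio (2 ^ (2 * n))))
    (hY : Y = Submodule.span ℝ (⋃ k ∈ Finset.range n, haarLevel (2 * k)))
    (Q : (ℝ → ℝ) →ₗ[ℝ] (ℝ → ℝ))
    (hQ1 : ∀ f ∈ X, Q f ∈ Y)
    (hQ3 : ∀ f ∈ X, ∀ g ∈ Y, L2inner (f - Q f) g = 0)
    (K : ℝ) (hK : ∀ f ∈ X, L1normI (Q f) ≤ K * L1normI f) :
    (2 * n + 1 : ℝ) / 3 ≤ K := by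
  have hfX : spike (2 * n) ∈ X := hX ▸ spike_mem_span (2 * n)
  have hYsub : Y ≤ Submodule.span ℝ (⋃ k, haarLevel (2 * k)) :=
    hY ▸ Submodule.span_mono (iUnion₂_subset fun k _ => subset_iUnion (fun k => haarLevel (2 * k)) k)
  have hYmemLp : ∀ y ∈ Y, MemLp y ⊤ := fun y hy => memLp_top_of_mem_span
    (fun _ hs => memLp_top_of_mem_range_haar ((iUnion_subset fun _ => image_subset_range _ _) hs))
    (hYsub hy)
  have hgY : evenPart n ∈ Y := hY ▸ Submodule.sum_mem _ fun k hk => Submodule.smul_mem _ _ <|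
    Submodule.subset_span <| mem_iUnion₂.2 ⟨k, hk, haar_two_pow_mem_haarLevel _⟩
  have hQf : Q (spike (2 * n)) =ᵐ[volume.restrict (Ioc 0 1)] evenPart n :=
    ae_eq_of_L2inner_sub_eq_zero hYmemLp (memLp_top_spike _) (hQ1 _ hfX) hgY (hQ3 _ hfX)
      fun y hy => by
        rw [spike_two_mul, add_sub_cancel_left]
        exact L2inner_oddPart_eq_zero n (hYsub hy)
  have hbound := hK _ hfX
  rw [L1normI_congr_ae hQf, L1normI_spike, L1normI, integral_abs_evenPart, mul_one] at hbound
  have h4 : ((4 : ℝ) ^ n)⁻¹ ≤ 4⁻¹ :=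
    inv_anti₀ (by norm_num) (le_self_pow₀ (by norm_num) (by omega))
  linarith

/-- the `L²`-orthogonal projection `Q` from
`X = span{h_i : i < 2^{2n}} ⊂ L¹[0,1]` onto the even Haar levels
`Y = span(⋃_{k<n} H_{2k})` has `L¹` operator norm at least `(2n+1)/3`. -/
theorem stmt12 (n : ℕ) (hn : 1 ≤ n)
    (X Y : Submodule ℝ (ℝ → ℝ))
    (hX : X = Submodule.span ℝ (haar '' Set.Iio (2 ^ (2 * n))))
    (hY : Y = Submodule.span ℝ (⋃ k ∈ Finset.range n, haarLevel (2 * k)))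
    (Q : (ℝ → ℝ) →ₗ[ℝ] (ℝ → ℝ))
    (hQ1 : ∀ f ∈ X, Q f ∈ Y) (hQ2 : ∀ f ∈ Y, Q f = f)
    (hQ3 : ∀ f ∈ X, ∀ g ∈ Y, L2inner (f - Q f) g = 0)
    (K : ℝ) (hK : ∀ f ∈ X, L1normI (Q f) ≤ K * L1normI f) :
    (2 * n + 1 : ℝ) / 3 ≤ K :=
  stmt12_general n hn X Y hX hY Q hQ1 hQ3 K hK
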